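/- Let q, β > 0, 0 < α < 1, n ∈ ℕ with n^{1-α} > 2, r ∈ ℕ, weights w_s ≥ 0 with ∑_{s=1}^r w_s = 1, and f : ℝ → ℝ bounded and continuous. Then for every x ∈ ℝ, |B̄_n(f)(x) - f(x)| ≤ ω(f, 1/n + n^{-α}) + 2(q + 1/q)‖f‖_∞ · e^{-β(n^{1-α} - 1)}. -/

import Mathlib

open MeasureTheory Filter Real

noncomputable def nu (q β x : ℝ) : ℝ :=
  (1 - q * Real.exp (-β * x)) / (1 + q * Real.exp (-β * x))

noncomputable def G (q β x : ℝ) : ℝ := (1/4) * (nu q β (x+1) - nu q β (x-1))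

noncomputable def Psi (q β x : ℝ) : ℝ := (G q β x + G (1/q) β x) / 2

noncomputable def omega (f : ℝ → ℝ) (θ : ℝ) : ℝ :=
  sSup {d : ℝ | ∃ x y : ℝ, |x - y| ≤ θ ∧ d = |f x - f y|}

noncomputable def supNorm (f : ℝ → ℝ) : ℝ := ⨆ x : ℝ, |f x|

noncomputable def Bbar (q β : ℝ) (n r : ℕ) (w : ℕ → ℝ) (f : ℝ → ℝ) (x : ℝ) : ℝ :=
  ∫ v : ℝ, (∑ s ∈ Finset.Icc 1 r, w s * f (v / n + s / (n * r))) *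
    Psi q β ((n : ℝ) * x - v)

/-!
`Ψ` is a probability density. Since `ν_q = 1 - 2qe^{-βy}/(1 + qe^{-βy})`, the function
`N(y) = y + (2/β) log(1 + qe^{-βy})` is a primitive of `ν_q`, so `(N(x+1) - N(x-1))/4` is a
primitive of `G_q` with limits `∓1/2` at `∓∞`. This gives `∫ G_q = 1` and, via
`log(1+u) - log(1+ue^{-2β}) ≤ u(1 - e^{-2β}) ≤ 2βu`, the tail bound `∫_T^∞ G_q ≤ qe^{-β(T-1)}`.
As `G_q(-x) = G_{1/q}(x)`, `Ψ` is even and has mass at most `(q + 1/q)e^{-β(T-1)}` outside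
`[-T, T]`.

After the substitution `u = nx - v`,
`B̄_n f(x) - f(x) = ∫ (∑ₛ wₛ f((nx-u)/n + s/(nr)) - f(x)) Ψ(u) du`.
For `|u| ≤ T = n^{1-α}` every node is within `1/n + n^{-α}` of `x`, which gives `ω`; elsewhere the
integrand is at most `2‖f‖_∞` times `Ψ`, and the tail bound applies.
-/

open Set Topology

theorem integrable_deriv_of_nonneg {g g' : ℝ → ℝ} {l l' : ℝ}
    (hderiv : ∀ x, HasDerivAt g (g' x) x) (hg' : ∀ x, 0 ≤ g' x)
    (hbot : Tendsto g atBot (𝓝 l)) (htop : Tendsto g atTop (𝓝 l')) : Integrable g' := by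
  have hmono : Monotone g := monotone_of_hasDerivAt_nonneg hderiv hg'
  have hIoc : ∀ a b, IntegrableOn g' (Ioc a b) := fun a b =>
    intervalIntegral.integrableOn_deriv_of_nonneg
      (fun x _ => (hderiv x).continuousAt.continuousWithinAt) (fun x _ => hderiv x)
      (fun x _ => hg' x)
  refine integrable_of_intervalIntegral_norm_bounded (l' - l) (fun i => hIoc (-i) i)
    tendsto_neg_atTop_atBot tendsto_id (Eventually.of_forall fun i => ?_)
  calc ∫ x in -i..i, ‖g' x‖ = ∫ x in -i..i, g' x := by simp_rw [Real.norm_of_nonneg (hg' _)]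
    _ = g i - g (-i) :=
      intervalIntegral.integral_eq_sub_of_hasDerivAt (fun x _ => hderiv x) ⟨hIoc _ _, hIoc _ _⟩
    _ ≤ l' - l := sub_le_sub (hmono.ge_of_tendsto htop i) (hmono.le_of_tendsto hbot (-i))

theorem abs_integral_mul_kernel_sub_le {X : Type*} [MeasurableSpace X] {μ : Measure X}
    {K h : X → ℝ} {S : Set X} {a A B : ℝ} (hS : MeasurableSet S) (hK0 : ∀ x, 0 ≤ K x)
    (hK : Integrable K μ) (hK1 : ∫ x, K x ∂μ = 1) (hh : AEStronglyMeasurable h μ) (hA0 : 0 ≤ A)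
    (hA : ∀ x ∈ S, |h x - a| ≤ A) (hB : ∀ x, |h x - a| ≤ B) :
    |∫ x, h x * K x ∂μ - a| ≤ A + B * ∫ x in Sᶜ, K x ∂μ := by
  have hdev : AEStronglyMeasurable (fun x => h x - a) μ := hh.sub aestronglyMeasurable_const
  have habsK : Integrable (fun x => |h x - a| * K x) μ :=
    hK.bdd_mul hdev.norm (ae_of_all _ fun x => by simpa using hB x)
  have hhK : Integrable (fun x => h x * K x) μ :=
    hK.bdd_mul hh (c := |a| + B) <| ae_of_all _ fun x => by
      rw [Real.norm_eq_abs]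
      linarith [abs_sub_abs_le_abs_sub (h x) a, hB x]
  have hrep : ∫ x, (h x - a) * K x ∂μ = ∫ x, h x * K x ∂μ - a := by
    simp_rw [sub_mul]
    rw [integral_sub hhK (hK.const_mul a), integral_const_mul, hK1, mul_one]
  have hKS : ∫ x in S, K x ∂μ ≤ 1 := hK1 ▸ setIntegral_le_integral hK (ae_of_all _ hK0)
  calc |∫ x, h x * K x ∂μ - a| = |∫ x, (h x - a) * K x ∂μ| := by rw [hrep]
    _ ≤ ∫ x, |h x - a| * K x ∂μ := abs_integral_le_integral_abs.trans_eq <| by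
        simp_rw [abs_mul, abs_of_nonneg (hK0 _)]
    _ = (∫ x in S, |h x - a| * K x ∂μ) + ∫ x in Sᶜ, |h x - a| * K x ∂μ :=
        (integral_add_compl hS habsK).symm
    _ ≤ (∫ x in S, A * K x ∂μ) + ∫ x in Sᶜ, B * K x ∂μ := by
        refine add_le_add ?_ ?_
        · exact setIntegral_mono_on habsK.integrableOn (hK.const_mul A).integrableOn hS
            fun x hx => mul_le_mul_of_nonneg_right (hA x hx) (hK0 x)
        · exact setIntegral_mono_on habsK.integrableOn (hK.const_mul B).integrableOn hS.compl
            fun x _ => mul_le_mul_of_nonneg_right (hB x) (hK0 x)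
    _ ≤ A + B * ∫ x in Sᶜ, K x ∂μ := by
        rw [integral_const_mul, integral_const_mul]
        gcongr
        exact mul_le_of_le_one_right hA0 hKS

theorem abs_sum_mul_sub_le {ι : Type*} {I : Finset ι} {w y : ι → ℝ} {a A : ℝ}
    (hw : ∀ i ∈ I, 0 ≤ w i) (hw1 : ∑ i ∈ I, w i = 1) (hy : ∀ i ∈ I, |y i - a| ≤ A) :
    |∑ i ∈ I, w i * y i - a| ≤ A := by
  have hrep : ∑ i ∈ I, w i * y i - a = ∑ i ∈ I, w i * (y i - a) := by
    simp_rw [mul_sub, Finset.sum_sub_distrib, ← Finset.sum_mul, hw1, one_mul]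
  calc |∑ i ∈ I, w i * y i - a| ≤ ∑ i ∈ I, w i * |y i - a| := by
        rw [hrep]
        refine (Finset.abs_sum_le_sum_abs _ _).trans_eq (Finset.sum_congr rfl fun i hi => ?_)
        rw [abs_mul, abs_of_nonneg (hw i hi)]
    _ ≤ ∑ i ∈ I, w i * A :=
        Finset.sum_le_sum fun i hi => mul_le_mul_of_nonneg_left (hy i hi) (hw i hi)
    _ = A := by rw [← Finset.sum_mul, hw1, one_mul]

section Kernel

variable {q β : ℝ}

lemma nu_eq (hq : 0 ≤ q) (β y : ℝ) : nu q β y = 2 / (1 + q * exp (-β * y)) - 1 := by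
  have : 0 < 1 + q * exp (-β * y) := by positivity
  rw [nu]
  field_simp
  ring

lemma monotone_nu (hq : 0 ≤ q) (hβ : 0 ≤ β) : Monotone (nu q β) := fun a b hab => by
  rw [nu_eq hq, nu_eq hq]
  gcongr _ / (1 + q * exp ?_) - _
  nlinarith

lemma nu_neg (hq : 0 < q) (β y : ℝ) : nu q β (-y) = -nu (1/q) β y := by
  have hexp : exp (-β * -y) = (exp (-β * y))⁻¹ := by rw [← exp_neg]; ring_nf
  have : 0 < exp (-β * y) := exp_pos _
  rw [nu, nu, hexp]
  field_simp
  ring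

lemma G_nonneg (hq : 0 ≤ q) (hβ : 0 ≤ β) (x : ℝ) : 0 ≤ G q β x := by
  have := monotone_nu hq hβ (show x - 1 ≤ x + 1 by linarith)
  rw [G]
  linarith

lemma G_neg (hq : 0 < q) (β x : ℝ) : G q β (-x) = G (1/q) β x := by
  rw [G, G, show -x + 1 = -(x - 1) by ring, show -x - 1 = -(x + 1) by ring, nu_neg hq, nu_neg hq]
  ring

noncomputable def nuPrimitive (q β y : ℝ) : ℝ := y + 2 / β * log (1 + q * exp (-β * y))

lemma hasDerivAt_nuPrimitive (hq : 0 ≤ q) (hβ : β ≠ 0) (y : ℝ) :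
    HasDerivAt (nuPrimitive q β) (nu q β y) y := by
  have hden : 0 < 1 + q * exp (-β * y) := by positivity
  have hinner : HasDerivAt (fun y => 1 + q * exp (-β * y)) (q * (exp (-β * y) * -β)) y :=
    (((hasDerivAt_id y).const_mul (-β)).exp.const_mul q).const_add 1 |>.congr_deriv (by simp)
  have h : HasDerivAt (nuPrimitive q β)
      (1 + 2 / β * (q * (exp (-β * y) * -β) / (1 + q * exp (-β * y)))) y :=
    (hasDerivAt_id' y).add ((hinner.log hden.ne').const_mul (2 / β))
  convert h using 1
  unfold nu
  field_simp
  ring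

lemma nuPrimitive_add_self (hq : 0 < q) (hβ : β ≠ 0) (y : ℝ) :
    nuPrimitive q β y + y = 2 / β * log (exp (β * y) + q) := by
  have hfactor : 1 + q * exp (-β * y) = exp (-β * y) * (exp (β * y) + q) := by
    rw [mul_add, ← exp_add]; ring_nf; rw [exp_zero]; ring
  rw [nuPrimitive, hfactor, log_mul (exp_pos _).ne' (by positivity), log_exp]
  field_simp
  ring

lemma tendsto_nuPrimitive_sub_self_atTop (hβ : 0 < β) :
    Tendsto (fun y => nuPrimitive q β y - y) atTop (𝓝 0) := by
  have hexp : Tendsto (fun y => exp (-β * y)) atTop (𝓝 0) :=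
    tendsto_exp_atBot.comp (tendsto_id.const_mul_atTop_of_neg (neg_lt_zero.2 hβ))
  have := (((hexp.const_mul q).const_add 1).log (by norm_num)).const_mul (2 / β)
  simp only [mul_zero, add_zero, log_one] at this
  exact this.congr fun y => by rw [nuPrimitive]; ring

lemma tendsto_nuPrimitive_add_self_atBot (hq : 0 < q) (hβ : 0 < β) :
    Tendsto (fun y => nuPrimitive q β y + y) atBot (𝓝 (2 / β * log q)) := by
  have hexp : Tendsto (fun y => exp (β * y)) atBot (𝓝 0) :=
    tendsto_exp_atBot.comp (tendsto_id.const_mul_atBot hβ)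
  have := ((hexp.add_const q).log (by simpa using hq.ne')).const_mul (2 / β)
  rw [zero_add] at this
  exact this.congr fun y => (nuPrimitive_add_self hq hβ.ne' y).symm

noncomputable def GPrimitive (q β x : ℝ) : ℝ :=
  (nuPrimitive q β (x + 1) - nuPrimitive q β (x - 1)) / 4

lemma hasDerivAt_GPrimitive (hq : 0 ≤ q) (hβ : β ≠ 0) (x : ℝ) :
    HasDerivAt (GPrimitive q β) (G q β x) x := by
  have h : HasDerivAt (GPrimitive q β) ((nu q β (x + 1) - nu q β (x - 1)) / 4) x :=
    (((hasDerivAt_nuPrimitive hq hβ (x + 1)).comp_add_const x 1).sub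
      ((hasDerivAt_nuPrimitive hq hβ (x - 1)).comp_sub_const x 1)).div_const 4
  exact h.congr_deriv (by rw [G]; ring)

lemma tendsto_GPrimitive_atTop (hβ : 0 < β) : Tendsto (GPrimitive q β) atTop (𝓝 (1 / 2)) := by
  have h := tendsto_nuPrimitive_sub_self_atTop (q := q) hβ
  have := (((h.comp (tendsto_atTop_add_const_right _ 1 tendsto_id)).sub
    (h.comp (tendsto_atTop_add_const_right _ (-1) tendsto_id))).add_const 2).div_const 4
  rw [show ((0 : ℝ) - 0 + 2) / 4 = 1 / 2 by norm_num] at this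
  refine this.congr fun x => ?_
  simp only [GPrimitive, Function.comp_apply, id_eq, ← sub_eq_add_neg]
  ring

lemma tendsto_GPrimitive_atBot (hq : 0 < q) (hβ : 0 < β) :
    Tendsto (GPrimitive q β) atBot (𝓝 (-(1 / 2))) := by
  have h := tendsto_nuPrimitive_add_self_atBot hq hβ
  have := (((h.comp (tendsto_atBot_add_const_right _ 1 tendsto_id)).sub
    (h.comp (tendsto_atBot_add_const_right _ (-1) tendsto_id))).sub_const 2).div_const 4
  rw [sub_self, zero_sub, show (-2 : ℝ) / 4 = -(1 / 2) by norm_num] at this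
  refine this.congr fun x => ?_
  simp only [GPrimitive, Function.comp_apply, id_eq, ← sub_eq_add_neg]
  ring

lemma integrable_G (hq : 0 < q) (hβ : 0 < β) : Integrable (G q β) :=
  integrable_deriv_of_nonneg (hasDerivAt_GPrimitive hq.le hβ.ne') (G_nonneg hq.le hβ.le)
    (tendsto_GPrimitive_atBot hq hβ) (tendsto_GPrimitive_atTop hβ)

lemma integral_G (hq : 0 < q) (hβ : 0 < β) : ∫ x, G q β x = 1 := by
  rw [integral_of_hasDerivAt_of_tendsto (hasDerivAt_GPrimitive hq.le hβ.ne') (integrable_G hq hβ)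
    (tendsto_GPrimitive_atBot hq hβ) (tendsto_GPrimitive_atTop hβ)]
  norm_num

lemma log_one_add_sub_log_one_add_le {u v : ℝ} (hv : 0 ≤ v) (hvu : v ≤ u) :
    log (1 + u) - log (1 + v) ≤ u - v := by
  rw [← log_div (by linarith) (by linarith)]
  calc log ((1 + u) / (1 + v)) ≤ (1 + u) / (1 + v) - 1 :=
        log_le_sub_one_of_pos (div_pos (by linarith) (by linarith))
    _ = (u - v) / (1 + v) := by field_simp; ring
    _ ≤ u - v := div_le_self (by linarith) (by linarith)

lemma setIntegral_Ioi_G_le (hq : 0 < q) (hβ : 0 < β) (T : ℝ) :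
    ∫ x in Ioi T, G q β x ≤ q * exp (-β * (T - 1)) := by
  rw [integral_Ioi_of_hasDerivAt_of_nonneg' (fun x _ => hasDerivAt_GPrimitive hq.le hβ.ne' x)
    (fun x _ => G_nonneg hq.le hβ.le x) (tendsto_GPrimitive_atTop hβ)]
  set u := q * exp (-β * (T - 1))
  have hv : q * exp (-β * (T + 1)) = u * exp (-(2 * β)) := by
    rw [mul_assoc, ← exp_add]; ring_nf
  have hu : 0 ≤ u := by positivity
  have hε : exp (-(2 * β)) ≤ 1 := exp_le_one_iff.2 (by linarith)
  have hlin : 1 - exp (-(2 * β)) ≤ 2 * β := by linarith [add_one_le_exp (-(2 * β))]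
  have hprim : 1 / 2 - GPrimitive q β T
      = (log (1 + u) - log (1 + q * exp (-β * (T + 1)))) / (2 * β) := by
    simp only [GPrimitive, nuPrimitive, u]
    field_simp
    ring
  rw [hprim, hv]
  calc (log (1 + u) - log (1 + u * exp (-(2 * β)))) / (2 * β)
      ≤ (u - u * exp (-(2 * β))) / (2 * β) := by
        gcongr ?_ / _
        exact log_one_add_sub_log_one_add_le (by positivity) (mul_le_of_le_one_right hu hε)
    _ ≤ u := by
        rw [div_le_iff₀ (by positivity)]
        nlinarith

lemma Psi_nonneg (hq : 0 ≤ q) (hβ : 0 ≤ β) (x : ℝ) : 0 ≤ Psi q β x :=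
  div_nonneg (add_nonneg (G_nonneg hq hβ x) (G_nonneg (one_div_nonneg.2 hq) hβ x)) zero_le_two

lemma Psi_neg (hq : 0 < q) (β x : ℝ) : Psi q β (-x) = Psi q β x := by
  rw [Psi, Psi, G_neg hq, G_neg (by positivity), one_div_one_div, add_comm]

lemma integrable_Psi (hq : 0 < q) (hβ : 0 < β) : Integrable (Psi q β) :=
  ((integrable_G hq hβ).add (integrable_G (by positivity) hβ)).div_const 2

lemma integral_Psi (hq : 0 < q) (hβ : 0 < β) : ∫ x, Psi q β x = 1 := by
  simp only [Psi]
  rw [integral_div, integral_add (integrable_G hq hβ) (integrable_G (by positivity) hβ),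
    integral_G hq hβ, integral_G (by positivity) hβ]
  norm_num

lemma setIntegral_compl_Icc_Psi_le (hq : 0 < q) (hβ : 0 < β) {T : ℝ} (hT : 0 ≤ T) :
    ∫ x in (Icc (-T) T)ᶜ, Psi q β x ≤ (q + 1 / q) * exp (-β * (T - 1)) := by
  have hΨ := integrable_Psi hq hβ
  have hleft : ∫ x in Iio (-T), Psi q β x = ∫ x in Ioi T, Psi q β x := by
    rw [← integral_Iic_eq_integral_Iio, ← neg_neg T, ← integral_comp_neg_Ioi, neg_neg]
    simp_rw [Psi_neg hq]
  have hright : ∫ x in Ioi T, Psi q β x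
      = ((∫ x in Ioi T, G q β x) + ∫ x in Ioi T, G (1 / q) β x) / 2 := by
    simp only [Psi]
    rw [integral_div, integral_add (integrable_G hq hβ).integrableOn
      (integrable_G (by positivity) hβ).integrableOn]
  have hcompl : (Icc (-T) T)ᶜ = Iio (-T) ∪ Ioi T := by
    ext x
    simp only [mem_compl_iff, mem_Icc, mem_union, mem_Iio, mem_Ioi, not_and_or, not_le]
  have hdisj : Disjoint (Iio (-T)) (Ioi T) :=
    (Iic_disjoint_Ioi (by linarith)).mono_left Iio_subset_Iic_self
  rw [hcompl, setIntegral_union hdisj measurableSet_Ioi hΨ.integrableOn hΨ.integrableOn, hleft,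
    hright]
  linarith [setIntegral_Ioi_G_le hq hβ T, setIntegral_Ioi_G_le (q := 1 / q) (by positivity) hβ T]

end Kernel

section Modulus

variable {f : ℝ → ℝ}

lemma abs_le_supNorm (hfb : ∃ M, ∀ x, |f x| ≤ M) (x : ℝ) : |f x| ≤ supNorm f := by
  obtain ⟨M, hM⟩ := hfb
  exact le_ciSup ⟨M, by rintro _ ⟨y, rfl⟩; exact hM y⟩ x

lemma abs_sub_le_two_mul_supNorm (hfb : ∃ M, ∀ x, |f x| ≤ M) (x y : ℝ) :
    |f x - f y| ≤ 2 * supNorm f := by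
  linarith [abs_sub (f x) (f y), abs_le_supNorm hfb x, abs_le_supNorm hfb y]

lemma abs_sub_le_omega (hfb : ∃ M, ∀ x, |f x| ≤ M) {θ x y : ℝ} (h : |x - y| ≤ θ) :
    |f x - f y| ≤ omega f θ := by
  refine le_csSup ⟨2 * supNorm f, ?_⟩ ⟨x, y, h, rfl⟩
  rintro _ ⟨a, b, -, rfl⟩
  exact abs_sub_le_two_mul_supNorm hfb a b

lemma omega_nonneg (hfb : ∃ M, ∀ x, |f x| ≤ M) {θ : ℝ} (hθ : 0 ≤ θ) : 0 ≤ omega f θ := by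
  simpa using abs_sub_le_omega hfb (x := 0) (y := 0) (by simpa using hθ)

end Modulus

noncomputable def quadAvg (n r : ℕ) (w : ℕ → ℝ) (f : ℝ → ℝ) (v : ℝ) : ℝ :=
  ∑ s ∈ Finset.Icc 1 r, w s * f (v / n + s / (n * r))

lemma continuous_quadAvg {n r : ℕ} {w : ℕ → ℝ} {f : ℝ → ℝ} (hf : Continuous f) :
    Continuous (quadAvg n r w f) := by
  unfold quadAvg
  fun_prop

lemma Bbar_eq_integral_quadAvg_mul_Psi (q β : ℝ) (n r : ℕ) (w : ℕ → ℝ) (f : ℝ → ℝ) (x : ℝ) :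
    Bbar q β n r w f x = ∫ u, quadAvg n r w f (n * x - u) * Psi q β u := by
  rw [← integral_sub_left_eq_self _ volume ((n : ℝ) * x)]
  simp only [sub_sub_cancel]
  rfl

lemma abs_node_sub_le {n : ℝ} (hn : 0 < n) {r s : ℕ} (hs : s ∈ Finset.Icc 1 r) (x u : ℝ) :
    |(n * x - u) / n + s / (n * r) - x| ≤ 1 / n + |u| / n := by
  obtain ⟨hs1, hsr⟩ := Finset.mem_Icc.1 hs
  have hs0 : (0 : ℝ) < s := by exact_mod_cast hs1
  have hsr' : (s : ℝ) ≤ r := by exact_mod_cast hsr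
  have hr0 : (0 : ℝ) < r := hs0.trans_le hsr'
  have hnode : (s : ℝ) / (n * r) ≤ 1 / n := by
    rw [div_le_div_iff₀ (by positivity) hn]
    nlinarith
  have heq : (n * x - u) / n + s / (n * r) - x = s / (n * r) - u / n := by
    field_simp
    ring
  calc |(n * x - u) / n + s / (n * r) - x| ≤ |(s : ℝ) / (n * r)| + |u / n| := by
        rw [heq]; exact abs_sub _ _
    _ = s / (n * r) + |u| / n := by
        rw [abs_of_nonneg (by positivity), abs_div, abs_of_pos hn]
    _ ≤ 1 / n + |u| / n := by linarith

theorem Bbar_quantitative_general (q β α : ℝ) (hq : 0 < q) (hβ : 0 < β)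
    (n : ℕ) (hn : 2 < (n : ℝ) ^ (1 - α))
    (r : ℕ) (w : ℕ → ℝ) (hw : ∀ s, 0 ≤ w s) (hw1 : ∑ s ∈ Finset.Icc 1 r, w s = 1)
    (f : ℝ → ℝ) (hf : Continuous f) (hfb : ∃ M : ℝ, ∀ x : ℝ, |f x| ≤ M) (x : ℝ) :
    |Bbar q β n r w f x - f x| ≤
      omega f (1 / n + (n : ℝ) ^ (-α)) +
        2 * (q + 1/q) * supNorm f * Real.exp (-β * ((n : ℝ) ^ (1 - α) - 1)) := by
  have hn0 : (0 : ℝ) < n := Nat.cast_pos.2 <| Nat.pos_of_ne_zero fun h0 => by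
    rw [h0, Nat.cast_zero] at hn
    linarith [zero_rpow_le_one (1 - α)]
  set T := (n : ℝ) ^ (1 - α) with hT
  have hTn : T / n = (n : ℝ) ^ (-α) := by
    rw [hT, show 1 - α = -α + 1 by ring, rpow_add_one hn0.ne', mul_div_cancel_right₀ _ hn0.ne']
  have near : ∀ u ∈ Icc (-T) T,
      |quadAvg n r w f (n * x - u) - f x| ≤ omega f (1 / n + (n : ℝ) ^ (-α)) := fun u hu =>
    abs_sum_mul_sub_le (fun s _ => hw s) hw1 fun s hs => abs_sub_le_omega hfb <|
      (abs_node_sub_le hn0 hs x u).trans <| by rw [← hTn]; gcongr; exact abs_le.2 hu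
  have far : ∀ u, |quadAvg n r w f (n * x - u) - f x| ≤ 2 * supNorm f := fun u =>
    abs_sum_mul_sub_le (fun s _ => hw s) hw1 fun s _ => abs_sub_le_two_mul_supNorm hfb _ x
  rw [Bbar_eq_integral_quadAvg_mul_Psi]
  calc _ ≤ omega f (1 / n + (n : ℝ) ^ (-α)) + 2 * supNorm f * ∫ u in (Icc (-T) T)ᶜ, Psi q β u :=
        abs_integral_mul_kernel_sub_le measurableSet_Icc (Psi_nonneg hq.le hβ.le) (integrable_Psi hq hβ)
          (integral_Psi hq hβ)
          ((continuous_quadAvg hf).comp (continuous_sub_left _)).aestronglyMeasurable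
          (omega_nonneg hfb (by positivity)) near far
    _ ≤ omega f (1 / n + (n : ℝ) ^ (-α)) + 2 * supNorm f * ((q + 1 / q) * exp (-β * (T - 1))) := by
        have hsup : 0 ≤ supNorm f := (abs_nonneg _).trans (abs_le_supNorm hfb 0)
        gcongr
        exact setIntegral_compl_Icc_Psi_le hq hβ (by positivity)
    _ = _ := by ring

theorem Bbar_quantitative (q β α : ℝ) (hq : 0 < q) (hβ : 0 < β)
    (hα0 : 0 < α) (hα1 : α < 1) (n : ℕ) (hn : 2 < (n : ℝ) ^ (1 - α))
    (r : ℕ) (w : ℕ → ℝ) (hw : ∀ s, 0 ≤ w s) (hw1 : ∑ s ∈ Finset.Icc 1 r, w s = 1)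
    (f : ℝ → ℝ) (hf : Continuous f) (hfb : ∃ M : ℝ, ∀ x : ℝ, |f x| ≤ M) (x : ℝ) :
    |Bbar q β n r w f x - f x| ≤
      omega f (1 / n + (n : ℝ) ^ (-α)) +
        2 * (q + 1/q) * supNorm f * Real.exp (-β * ((n : ℝ) ^ (1 - α) - 1)) :=
  Bbar_quantitative_general q β α hq hβ n hn r w hw hw1 f hf hfb x
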